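/- arXiv:2404.04239 — 4 statements merged into one kernel-verified Lean document; each statement's English description precedes it below -/
import Mathlib

section
/- For any real numbers M, N > 0 and α, β, γ in ℝ/ℤ, the quantity T_{M,N}(α+γ, β) is at most (1 + M·‖γ‖) · T_{M,N}(α, β), where T_{M,N}(α, β) := min over positive integers t of (t + M·‖αt‖ + N·‖βt‖) and ‖·‖ denotes distance to the nearest integer. -/
/-- Distance from a real number to the nearest integer (the norm on ℝ/ℤ). -/
noncomputable def dz (x : ℝ) : ℝ := |x - (round x : ℝ)|

/-- `TT M N α β = min_{t ∈ ℤ₊} (t + M‖αt‖ + N‖βt‖)`. -/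
noncomputable def TT (M N α β : ℝ) : ℝ :=
  ⨅ t : ℕ+, (((t : ℕ) : ℝ) + M * dz (α * ((t : ℕ) : ℝ)) + N * dz (β * ((t : ℕ) : ℝ)))

lemma dz_nonneg (x : ℝ) : 0 ≤ dz x := abs_nonneg _

lemma dz_le_int (x : ℝ) (n : ℤ) : dz x ≤ |x - n| := round_le x n

lemma dz_add (x y : ℝ) : dz (x + y) ≤ dz x + dz y := by
  calc dz (x + y) ≤ |x + y - ((round x + round y : ℤ) : ℝ)| := dz_le_int _ _
    _ ≤ dz x + dz y := by
        push_cast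
        rw [dz, dz]
        have : x + y - ((round x : ℝ) + (round y : ℝ)) =
            (x - round x) + (y - round y) := by ring
        rw [this]
        exact abs_add_le _ _
    
lemma dz_mul_nat (x : ℝ) (n : ℕ) : dz (x * n) ≤ n * dz x := by
  calc dz (x * n) ≤ |x * n - ((n * round x : ℤ) : ℝ)| := dz_le_int _ _
    _ = n * dz x := by
        push_cast
        rw [dz, show x * (n:ℝ) - (n:ℝ) * (round x : ℝ) = (x - round x) * n by ring,
          abs_mul, Nat.abs_cast, mul_comm]

theorem stmt_0 (M N : ℝ) (hM : 0 < M) (hN : 0 < N) (α β γ : ℝ) :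
    TT M N (α + γ) β ≤ (1 + M * dz γ) * TT M N α β := by
  set c := 1 + M * dz γ with hc
  have hc0 : 0 ≤ c := add_nonneg zero_le_one (mul_nonneg hM.le (dz_nonneg γ))
  have key : ∀ t : ℕ+,
      (((t : ℕ) : ℝ) + M * dz ((α + γ) * ((t : ℕ) : ℝ)) + N * dz (β * ((t : ℕ) : ℝ)))
      ≤ c * (((t : ℕ) : ℝ) + M * dz (α * ((t : ℕ) : ℝ)) + N * dz (β * ((t : ℕ) : ℝ))) := by
    intro t
    set T : ℝ := ((t : ℕ) : ℝ)
    have hT1 : 1 ≤ T := by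
      have h : 1 ≤ (t : ℕ) := t.property
      show (1:ℝ) ≤ ((t : ℕ) : ℝ)
      exact_mod_cast h
    have h1 : dz ((α + γ) * T) ≤ dz (α * T) + T * dz γ := by
      have := dz_add (α * T) (γ * T)
      have h2 := dz_mul_nat γ (t : ℕ)
      calc dz ((α + γ) * T) = dz (α * T + γ * T) := by ring_nf
        _ ≤ dz (α * T) + dz (γ * T) := dz_add _ _
        _ ≤ dz (α * T) + T * dz γ := by linarith [dz_mul_nat γ (t : ℕ)]
    have hg : T ≤ T + M * dz (α * T) + N * dz (β * T) := by
      nlinarith [dz_nonneg (α * T), dz_nonneg (β * T)]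
    have : T + M * dz ((α + γ) * T) + N * dz (β * T)
        ≤ (T + M * dz (α * T) + N * dz (β * T)) + M * dz γ * T := by nlinarith
    calc T + M * dz ((α + γ) * T) + N * dz (β * T)
        ≤ (T + M * dz (α * T) + N * dz (β * T)) + M * dz γ * T := this
      _ ≤ (T + M * dz (α * T) + N * dz (β * T))
          + M * dz γ * (T + M * dz (α * T) + N * dz (β * T)) := by
          have h := mul_nonneg (mul_nonneg hM.le (dz_nonneg γ))
            (add_nonneg (mul_nonneg hM.le (dz_nonneg (α * T)))
              (mul_nonneg hN.le (dz_nonneg (β * T))))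
          nlinarith
      _ = c * (T + M * dz (α * T) + N * dz (β * T)) := by rw [hc]; ring
  have hbdd : BddBelow (Set.range fun t : ℕ+ =>
      (((t : ℕ) : ℝ) + M * dz ((α + γ) * ((t : ℕ) : ℝ)) + N * dz (β * ((t : ℕ) : ℝ)))) := by
    refine ⟨0, ?_⟩
    rintro x ⟨t, rfl⟩
    have h1 := dz_nonneg ((α + γ) * ((t : ℕ) : ℝ))
    have h2 := dz_nonneg (β * ((t : ℕ) : ℝ))
    have h3 : (0:ℝ) ≤ ((t : ℕ) : ℝ) := Nat.cast_nonneg _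
    dsimp only
    nlinarith
  calc TT M N (α + γ) β
      ≤ ⨅ t : ℕ+, c * (((t : ℕ) : ℝ) + M * dz (α * ((t : ℕ) : ℝ)) + N * dz (β * ((t : ℕ) : ℝ))) :=
        ciInf_mono hbdd key
    _ = c * TT M N α β := (Real.mul_iInf_of_nonneg hc0 _).symm
end

section
/- For any N ≥ 1/2 and α, β ∈ ℝ/ℤ, one has T_N(α, β) ≪ sqrt(N·(1 + ‖α−β‖·N)), i.e., min over positive integers t of (t + N‖αt‖ + N‖βt‖) is bounded by an absolute constant times sqrt(N(1 + ‖α−β‖N)). -/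
lemma dz_le_half (x : ℝ) : dz x ≤ 1 / 2 := abs_sub_round x

lemma dz_le_abs_sub_intCast (x : ℝ) (m : ℤ) : dz x ≤ |x - m| := round_le x m

lemma dz_sub_le (a b : ℝ) : dz (a - b) ≤ dz a + dz b :=
  calc dz (a - b) ≤ |a - b - ↑(round a - round b)| := dz_le_abs_sub_intCast _ _
    _ = |(a - round a) - (b - round b)| := by push_cast; ring_nf
    _ ≤ dz a + dz b := abs_sub _ _

lemma dz_mul_natCast_le (x : ℝ) (k : ℕ) : dz (x * k) ≤ k * dz x :=
  calc dz (x * k) ≤ |x * k - ↑(k * round x)| := dz_le_abs_sub_intCast _ _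
    _ = |(k : ℝ) * (x - round x)| := by push_cast; ring_nf
    _ = k * dz x := by rw [abs_mul, Nat.abs_cast, dz]

lemma TT_le {M N : ℝ} (hM : 0 ≤ M) (hN : 0 ≤ N) (α β : ℝ) (t : ℕ+) :
    TT M N α β ≤ (t : ℕ) + M * dz (α * (t : ℕ)) + N * dz (β * (t : ℕ)) := by
  refine ciInf_le ⟨0, ?_⟩ t
  rintro _ ⟨s, rfl⟩
  have := dz_nonneg (α * (s : ℕ))
  have := dz_nonneg (β * (s : ℕ))
  positivity

lemma TT_le_of_pos_nat {N : ℝ} (hN : 0 ≤ N) (α β : ℝ) {n : ℕ} (hn : 0 < n) :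
    TT N N α β ≤ n * (1 + dz (α - β) * N) + 2 * N / (n + 1) := by
  obtain ⟨t, ht0, htn, hα⟩ := Real.exists_nat_abs_mul_sub_round_le α hn
  have hαt : dz (α * t) ≤ 1 / (n + 1) := by rwa [mul_comm] at hα
  have hβt : dz (β * t) ≤ 1 / (n + 1) + n * dz (α - β) :=
    calc dz (β * t) = dz (α * t - (α - β) * t) := by ring_nf
      _ ≤ dz (α * t) + t * dz (α - β) :=
        (dz_sub_le _ _).trans (by gcongr; exact dz_mul_natCast_le _ _)
      _ ≤ 1 / (n + 1) + n * dz (α - β) := by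
        gcongr
        exact dz_nonneg _
  calc TT N N α β ≤ t + N * dz (α * t) + N * dz (β * t) := TT_le hN hN α β ⟨t, ht0⟩
    _ ≤ n + N * (1 / (n + 1)) + N * (1 / (n + 1) + n * dz (α - β)) := by
      gcongr
    _ = n * (1 + dz (α - β) * N) + 2 * N / (n + 1) := by ring

lemma exists_pos_nat_mul_add_div_le {N D : ℝ} (hN : 0 < N) (hD : 0 < D) (hDN : D ≤ 4 * N) :
    ∃ n : ℕ, 0 < n ∧ n * D + 2 * N / (n + 1) ≤ 5 * √(N * D) := by
  set S := √(N * D)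
  have hS : 0 < S := by positivity
  have hSsq : S ^ 2 = N * D := Real.sq_sqrt (by positivity)
  have hDS : D ≤ 2 * S := by nlinarith
  set Q := S / D
  have hQ : 0 < Q := by positivity
  have hQD : Q * D = S := div_mul_cancel₀ S hD.ne'
  refine ⟨⌈Q⌉₊, Nat.ceil_pos.2 hQ, ?_⟩
  have hnD : ⌈Q⌉₊ * D ≤ S + D :=
    calc ⌈Q⌉₊ * D ≤ (Q + 1) * D := by gcongr; exact (Nat.ceil_lt_add_one hQ.le).le
      _ = S + D := by rw [add_mul, hQD, one_mul]
  have hNn : 2 * N / (⌈Q⌉₊ + 1) ≤ 2 * S :=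
    calc 2 * N / (⌈Q⌉₊ + 1) ≤ 2 * N / Q := by gcongr; linarith [Nat.le_ceil Q]
      _ = 2 * S := by rw [div_eq_iff hQ.ne']; nlinarith
  linarith

theorem stmt_3 : ∃ C : ℝ, 0 < C ∧ ∀ N : ℝ, (1/2 : ℝ) ≤ N → ∀ α β : ℝ,
    TT N N α β ≤ C * Real.sqrt (N * (1 + dz (α - β) * N)) := by
  refine ⟨5, by norm_num, fun N hN α β => ?_⟩
  have hγ := dz_nonneg (α - β)
  have hγ' := dz_le_half (α - β)
  obtain ⟨n, hn, hbound⟩ := exists_pos_nat_mul_add_div_le (N := N) (D := 1 + dz (α - β) * N)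
    (by linarith) (by positivity) (by nlinarith)
  exact (TT_le_of_pos_nat (by linarith) α β hn).trans hbound
end

section
/- Let ℓ₁, ℓ₂ be coprime positive integers with ℓ₁, ℓ₂ ≍ L, let H ≥ 1, ε ∈ (0,1), and α₁, α₂ ∈ ℝ/ℤ. Then the Lebesgue measure of the set { α ∈ ℝ/ℤ : ‖ℓ₁α − α₁‖ ≤ H^{ε−1} and ‖ℓ₂α − α₂‖ ≤ H^{ε−1} } is O( H^{ε−1} L^{−1} + H^{2ε−2} ). -/
open Finset MeasureTheory

theorem Int.card_le_of_subset_Icc_of_modEq {d A : ℤ} (hd : 0 < d) (k : ℕ) {s : Finset ℤ}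
    (hs : s ⊆ Icc A (A + k * d)) (hmod : ∀ m ∈ s, ∀ m' ∈ s, m ≡ m' [ZMOD d]) :
    #s ≤ k + 1 := by
  calc #s ≤ #(Icc (A / d) (A / d + k)) := by
        refine card_le_card_of_injOn (· / d) (fun m hm => ?_) (fun m hm m' hm' h => ?_)
        · obtain ⟨hAm, hmA⟩ := mem_Icc.mp (hs hm)
          refine mem_Icc.mpr ⟨Int.ediv_le_ediv hd hAm, ?_⟩
          simpa [Int.add_mul_ediv_right _ _ hd.ne'] using Int.ediv_le_ediv hd hmA
        · rw [← Int.mul_ediv_add_emod m d, ← Int.mul_ediv_add_emod m' d]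
          exact congrArg₂ (d * · + ·) h (hmod m hm m' hm')
    _ = k + 1 := by simp [Int.card_Icc]; omega

theorem Int.card_Icc_ceil_floor_le {a b : ℝ} (h : a ≤ b) :
    (#(Icc ⌈a⌉ ⌊b⌋) : ℝ) ≤ b - a + 1 := by
  have hle : ⌈a⌉ ≤ ⌊b⌋ + 1 := by
    have := Int.ceil_le_floor_add_one a
    linarith [Int.floor_mono h]
  rw [Int.card_Icc, ← Int.cast_natCast, Int.toNat_of_nonneg (by omega)]
  push_cast
  linarith [Int.floor_le b, Int.le_ceil a]

theorem Int.modEq_of_mul_modEq_of_coprime {d c m m' n : ℤ} (hd : 0 < d) (hdc : Int.gcd d c = 1)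
    (hm : c * m ≡ n [ZMOD d]) (hm' : c * m' ≡ n [ZMOD d]) : m ≡ m' [ZMOD d] := by
  simpa [hdc] using Int.ModEq.cancel_left_div_gcd hd (hm.trans hm'.symm)

theorem abs_sub_sub_le_of_abs_sub_le {l₁ l₂ α α₁ α₂ x₁ x₂ δ : ℝ} (hl₁ : 0 ≤ l₁) (hl₂ : 0 ≤ l₂)
    (h₁ : |l₁ * α - α₁ - x₁| ≤ δ) (h₂ : |l₂ * α - α₂ - x₂| ≤ δ) :
    |l₂ * x₁ - l₁ * x₂ - (l₁ * α₂ - l₂ * α₁)| ≤ δ * (l₁ + l₂) := by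
  calc |l₂ * x₁ - l₁ * x₂ - (l₁ * α₂ - l₂ * α₁)|
      = |l₁ * (l₂ * α - α₂ - x₂) - l₂ * (l₁ * α - α₁ - x₁)| := by ring_nf
    _ ≤ l₁ * |l₂ * α - α₂ - x₂| + l₂ * |l₁ * α - α₁ - x₁| := by
        refine (abs_sub _ _).trans_eq ?_
        rw [abs_mul, abs_mul, abs_of_nonneg hl₁, abs_of_nonneg hl₂]
    _ ≤ δ * (l₁ + l₂) := by nlinarith

theorem round_mul_sub_mem_Icc {l : ℕ} (hl : 0 < l) (a : ℝ) {α : ℝ} (hα : α ∈ Set.Ico 0 1) :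
    round (l * α - a) ∈ Icc ⌈-a - 1 / 2⌉ (⌈-a - 1 / 2⌉ + 2 * l) := by
  have hround := abs_le.mp (abs_sub_round (l * α - a))
  have hl' : (1 : ℝ) ≤ l := by exact_mod_cast hl
  have hlα : l * α < l := by nlinarith [hα.2]
  have hlα' : 0 ≤ l * α := by nlinarith [hα.1]
  refine mem_Icc.mpr ⟨Int.ceil_le.mpr (by linarith), ?_⟩
  have : (round (l * α - a) : ℝ) < ⌈-a - 1 / 2⌉ + 2 * l := by
    linarith [Int.le_ceil (-a - 1 / 2)]
  exact_mod_cast this.le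

theorem volume_setOf_dz_le_le {l₁ l₂ : ℕ} (hl₁ : 0 < l₁) (hcop : Nat.Coprime l₁ l₂)
    (α₁ α₂ : ℝ) {δ : ℝ} (hδ : 0 ≤ δ) :
    volume {α : ℝ | α ∈ Set.Ico 0 1 ∧ dz (l₁ * α - α₁) ≤ δ ∧ dz (l₂ * α - α₂) ≤ δ}
      ≤ ENNReal.ofReal (3 * (2 * (δ * (l₁ + l₂)) + 1) * (2 * (δ / l₁))) := by
  set β := l₁ * α₂ - l₂ * α₁
  set W := δ * (l₁ + l₂)
  set A := ⌈-α₁ - 1 / 2⌉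
  set N := Icc ⌈β - W⌉ ⌊β + W⌋
  set M := N.biUnion fun n => (Icc A (A + 2 * l₁)).filter (fun m => l₂ * m ≡ n [ZMOD l₁])
  have hl₁R : (0 : ℝ) < l₁ := by exact_mod_cast hl₁
  have hcover : {α : ℝ | α ∈ Set.Ico 0 1 ∧ dz (l₁ * α - α₁) ≤ δ ∧ dz (l₂ * α - α₂) ≤ δ}
      ⊆ ⋃ m ∈ M, Metric.closedBall ((α₁ + m) / l₁) (δ / l₁) := by
    rintro α ⟨hα, h₁, h₂⟩
    set m₁ := round (l₁ * α - α₁)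
    set m₂ := round (l₂ * α - α₂)
    have hn : l₂ * m₁ - l₁ * m₂ ∈ N := by
      have := abs_le.mp (abs_sub_sub_le_of_abs_sub_le (Nat.cast_nonneg l₁) (Nat.cast_nonneg l₂)
        h₁ h₂)
      exact mem_Icc.mpr ⟨Int.ceil_le.mpr (by push_cast; linarith),
        Int.le_floor.mpr (by push_cast; linarith)⟩
    have hm₁ : m₁ ∈ M := mem_biUnion.mpr ⟨_, hn, mem_filter.mpr
      ⟨round_mul_sub_mem_Icc hl₁ α₁ hα, Int.modEq_iff_dvd.mpr ⟨-m₂, by ring⟩⟩⟩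
    refine Set.mem_biUnion hm₁ (Metric.mem_closedBall.mpr ?_)
    rw [Real.dist_eq, show α - (α₁ + m₁) / l₁ = (l₁ * α - α₁ - m₁) / l₁ by field_simp; ring,
      abs_div, abs_of_pos hl₁R]
    exact div_le_div_of_nonneg_right h₁ hl₁R.le
  have hcard : (#M : ℝ) ≤ 3 * (2 * W + 1) := by
    have hfiber : ∀ n ∈ N, #((Icc A (A + 2 * l₁)).filter (fun m => l₂ * m ≡ n [ZMOD l₁])) ≤ 3 :=
      fun n _ => Int.card_le_of_subset_Icc_of_modEq (by exact_mod_cast hl₁) 2 (filter_subset _ _)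
        fun m hm m' hm' => Int.modEq_of_mul_modEq_of_coprime (by exact_mod_cast hl₁)
          (by simpa using hcop) (mem_filter.mp hm).2 (mem_filter.mp hm').2
    have hN : (#N : ℝ) ≤ 2 * W + 1 := by
      have := Int.card_Icc_ceil_floor_le (a := β - W) (b := β + W)
        (by linarith [show 0 ≤ W by positivity])
      linarith
    calc (#M : ℝ) ≤ (#N * 3 : ℕ) := by exact_mod_cast card_biUnion_le_card_mul _ _ _ hfiber
      _ ≤ 3 * (2 * W + 1) := by push_cast; linarith
  calc volume _ ≤ volume (⋃ m ∈ M, Metric.closedBall ((α₁ + m) / l₁) (δ / l₁)) :=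
        measure_mono hcover
    _ ≤ ∑ m ∈ M, volume (Metric.closedBall ((α₁ + m) / l₁) (δ / l₁)) :=
        measure_biUnion_finset_le _ _
    _ = ENNReal.ofReal (#M * (2 * (δ / l₁))) := by
        simp only [Real.volume_closedBall, sum_const, nsmul_eq_mul]
        rw [ENNReal.ofReal_mul (Nat.cast_nonneg _), ENNReal.ofReal_natCast]
    _ ≤ _ := ENNReal.ofReal_le_ofReal (by gcongr)

theorem covering_bound_le_of_comparable {K L δ l₁ l₂ : ℝ} (hK : 1 ≤ K) (hδ : 0 ≤ δ)
    (hl₁ : 0 < l₁) (hL : 0 < L) (hLl₁ : L ≤ K * l₁) (hl₂L : l₂ ≤ K * L) :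
    3 * (2 * (δ * (l₁ + l₂)) + 1) * (2 * (δ / l₁)) ≤ 24 * K ^ 2 * (δ / L + δ ^ 2) := by
  have hinv : 1 / l₁ ≤ K / L := by
    rw [div_le_div_iff₀ hl₁ hL]; linarith
  have hratio : l₂ / l₁ ≤ K ^ 2 :=
    calc l₂ / l₁ = l₂ * (1 / l₁) := by ring
      _ ≤ (K * L) * (K / L) := by gcongr
      _ = K ^ 2 := by field_simp
  calc 3 * (2 * (δ * (l₁ + l₂)) + 1) * (2 * (δ / l₁))
      = 12 * δ ^ 2 * (1 + l₂ / l₁) + 6 * δ * (1 / l₁) := by field_simp; ring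
    _ ≤ 12 * δ ^ 2 * (1 + K ^ 2) + 6 * δ * (K / L) := by gcongr
    _ ≤ 24 * K ^ 2 * (δ / L + δ ^ 2) := by
        have hδL : 0 ≤ δ / L := by positivity
        have hK₁ : 6 * K ≤ 24 * K ^ 2 := by nlinarith
        have hK₂ : 12 * (1 + K ^ 2) ≤ 24 * K ^ 2 := by nlinarith
        rw [show 6 * δ * (K / L) = 6 * K * (δ / L) by ring]
        nlinarith [mul_le_mul_of_nonneg_right hK₁ hδL,
          mul_le_mul_of_nonneg_right hK₂ (sq_nonneg δ)]

theorem stmt_11 : ∀ K : ℝ, 1 ≤ K → ∃ C : ℝ, 0 < C ∧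
    ∀ (l₁ l₂ : ℕ) (L H ε α₁ α₂ : ℝ),
    0 < l₁ → 0 < l₂ → Nat.Coprime l₁ l₂ → 1 ≤ L → 1 ≤ H → 0 < ε → ε < 1 →
    (l₁ : ℝ) ≤ K * L → L ≤ K * (l₁ : ℝ) → (l₂ : ℝ) ≤ K * L → L ≤ K * (l₂ : ℝ) →
    MeasureTheory.volume {α : ℝ | α ∈ Set.Ico (0 : ℝ) 1 ∧
        dz ((l₁ : ℝ) * α - α₁) ≤ H ^ (ε - 1) ∧ dz ((l₂ : ℝ) * α - α₂) ≤ H ^ (ε - 1)}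
      ≤ ENNReal.ofReal (C * (H ^ (ε - 1) / L + H ^ (2 * ε - 2))) := by
  intro K hK
  refine ⟨24 * K ^ 2, by positivity, ?_⟩
  intro l₁ l₂ L H ε α₁ α₂ hl₁ _ hcop hL hH _ _ _ hLl₁ hl₂L _
  have hH₀ : 0 ≤ H := by linarith
  have hsq : H ^ (2 * ε - 2) = (H ^ (ε - 1)) ^ 2 := by
    rw [← Real.rpow_mul_natCast hH₀]
    ring_nf
  rw [hsq]
  refine (volume_setOf_dz_le_le hl₁ hcop α₁ α₂ (by positivity)).trans
    (ENNReal.ofReal_le_ofReal ?_)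
  exact covering_bound_le_of_comparable hK (by positivity) (by exact_mod_cast hl₁)
    (by linarith) hLl₁ hl₂L
end

section
/- Let c ≥ 1 be an integer, t a positive integer, and a, b integers. Define a', b' to be the integers of minimal absolute value with a t ≡ a' (mod c) and b t ≡ b' (mod c). Then for any integers x, y with (x+a)(y+b) ≡ λ (mod c), there exists an integer z with (tx + a')(ty + b') = t(cz + r) + a'b', where r ∈ {0, …, c−1} is the residue of t(λ − ab) mod c, and z ≪ (t·|x||y| + |b'||x| + |a'||y| + c)/c. -/
theorem stmt_16 : ∃ C : ℝ, 0 < C ∧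
    ∀ (c t : ℕ) (a b l x y a' b' : ℤ),
    0 < c → 0 < t →
    a' ≡ a * t [ZMOD (c : ℤ)] → 2 * |a'| ≤ (c : ℤ) →
    b' ≡ b * t [ZMOD (c : ℤ)] → 2 * |b'| ≤ (c : ℤ) →
    (x + a) * (y + b) ≡ l [ZMOD (c : ℤ)] →
    ∃ z : ℤ,
      ((t : ℤ) * x + a') * ((t : ℤ) * y + b')
          = (t : ℤ) * ((c : ℤ) * z + ((t : ℤ) * (l - a * b)) % (c : ℤ)) + a' * b' ∧
      (|z| : ℝ) ≤ C * ((t : ℝ) * |(x : ℝ)| * |(y : ℝ)| + |(b' : ℝ)| * |(x : ℝ)|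
          + |(a' : ℝ)| * |(y : ℝ)| + (c : ℝ)) / (c : ℝ) := by
  refine ⟨1, one_pos, ?_⟩
  intro c t a b l x y a' b' hc ht ha _ hb _ hxy
  have hc' : (0:ℤ) < (c:ℤ) := by exact_mod_cast hc
  set r : ℤ := ((t : ℤ) * (l - a * b)) % (c : ℤ) with hr
  have hrnn : 0 ≤ r := Int.emod_nonneg _ (ne_of_gt hc')
  have hrlt : r < (c:ℤ) := Int.emod_lt_of_pos _ hc'
  have hmod : (t:ℤ) * x * y + x * b' + y * a' ≡ r [ZMOD (c:ℤ)] := by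
    calc (t:ℤ)*x*y + x*b' + y*a'
        ≡ (t:ℤ)*x*y + x*(b*t) + y*(a*t) [ZMOD (c:ℤ)] :=
          Int.ModEq.add (Int.ModEq.add (Int.ModEq.refl _) (Int.ModEq.mul_left x hb))
            (Int.ModEq.mul_left y ha)
      _ = (t:ℤ) * ((x+a)*(y+b) - a*b) := by ring
      _ ≡ (t:ℤ) * (l - a*b) [ZMOD (c:ℤ)] :=
          Int.ModEq.mul_left _ (Int.ModEq.sub hxy (Int.ModEq.refl _))
      _ ≡ r [ZMOD (c:ℤ)] := (Int.emod_emod_of_dvd _ dvd_rfl).symm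
  have hdvd : (c:ℤ) ∣ ((t:ℤ)*x*y + x*b' + y*a' - r) := (hmod.symm).dvd
  refine ⟨((t:ℤ)*x*y + x*b' + y*a' - r) / (c:ℤ), ?_, ?_⟩
  · have hcz : (c:ℤ) * (((t:ℤ)*x*y + x*b' + y*a' - r) / (c:ℤ))
        = (t:ℤ)*x*y + x*b' + y*a' - r := Int.mul_ediv_cancel' hdvd
    rw [hcz]; ring
  · have hz : |((t:ℤ)*x*y + x*b' + y*a' - r) / (c:ℤ)| * (c:ℤ)
        ≤ (t:ℤ)*|x| * |y| + |b'| * |x| + |a'| * |y| + (c:ℤ) := by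
      have hcz : (c:ℤ) * (((t:ℤ)*x*y + x*b' + y*a' - r) / (c:ℤ))
          = (t:ℤ)*x*y + x*b' + y*a' - r := Int.mul_ediv_cancel' hdvd
      have h0 : |((t:ℤ)*x*y + x*b' + y*a' - r) / (c:ℤ)| * (c:ℤ)
          = |(t:ℤ)*x*y + x*b' + y*a' - r| := by
        calc |((t:ℤ)*x*y + x*b' + y*a' - r) / (c:ℤ)| * (c:ℤ)
            = |((t:ℤ)*x*y + x*b' + y*a' - r) / (c:ℤ)| * |(c:ℤ)| := by
              rw [abs_of_pos hc']
          _ = |((t:ℤ)*x*y + x*b' + y*a' - r) / (c:ℤ) * (c:ℤ)| := (abs_mul _ _).symm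
          _ = |(t:ℤ)*x*y + x*b' + y*a' - r| := by rw [mul_comm, hcz]
      rw [h0]
      have h1 : |(t:ℤ)*x*y + x*b' + y*a' - r|
          ≤ |(t:ℤ)*x*y| + |x*b'| + |y*a'| + |r| := by
        calc |(t:ℤ)*x*y + x*b' + y*a' - r|
            ≤ |(t:ℤ)*x*y + x*b' + y*a'| + |r| := abs_sub _ _
          _ ≤ |(t:ℤ)*x*y + x*b'| + |y*a'| + |r| :=
              add_le_add_left (abs_add_le _ _) _
          _ ≤ |(t:ℤ)*x*y| + |x*b'| + |y*a'| + |r| :=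
              add_le_add_left (add_le_add_left (abs_add_le _ _) _) _
      refine h1.trans ?_
      have e1 : |(t:ℤ)*x*y| = (t:ℤ)*|x| * |y| := by
        rw [abs_mul, abs_mul, abs_of_nonneg (Int.natCast_nonneg t)]
      have e2 : |x*b'| = |b'| * |x| := by rw [abs_mul, mul_comm]
      have e3 : |y*a'| = |a'| * |y| := by rw [abs_mul, mul_comm]
      rw [e1, e2, e3, abs_of_nonneg hrnn]
      exact add_le_add_right hrlt.le _
    have hcR : (0:ℝ) < (c:ℝ) := by exact_mod_cast hc
    rw [one_mul, le_div_iff₀ hcR]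
    exact_mod_cast hz
end
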